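/- Let m ≥ 1 and f(z) = z + Σ_{n≥m+1} aₙ zⁿ be a starlike function on the unit disk (f nonvanishing off 0, Re(z f'(z)/f(z)) > 0 off 0). Then |z|/(1+|z|^m)^{2/m} ≤ |f(z)| ≤ |z|/(1−|z|^m)^{2/m} for all z ∈ 𝔻. -/

import Mathlib

/-!
Write `f z = z * h z` with `h = 1 + z ^ m * G` (the coefficients `a₂, …, a_m` vanish) and
`q = z h' / h`, so that `z f' / f = 1 + q`. Starlikeness says `Re (1 + q) > 0`, i.e.
`ω = q / (2 + q)` maps the disk into the closed disk; as `ω` vanishes to order `m` at `0`, the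
higher-order Schwarz lemma gives `‖ω z‖ ≤ ‖z‖ ^ m`, which confines `q z` to an Apollonius disk:
`-2r^m/(1 + r^m) ≤ Re q ≤ 2r^m/(1 - r^m)` for `‖z‖ = r`. Along the radius,
`d/dt log ‖h (t z)‖ = Re q (t z) / t`, and integrating these bounds over `[0, 1]` gives
`-(2/m) log (1 + r^m) ≤ log ‖h z‖ ≤ -(2/m) log (1 - r^m)`.
-/

open Complex Metric Set

open Filter Topology Asymptotics

theorem norm_le_norm_two_add_of_re_one_add_pos {q : ℂ} (hq : 0 < (1 + q).re) : ‖q‖ ≤ ‖2 + q‖ := by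
  rw [← sq_le_sq₀ (norm_nonneg _) (norm_nonneg _), Complex.sq_norm, Complex.sq_norm,
    normSq_apply, normSq_apply]
  simp only [add_re, add_im, re_ofNat, im_ofNat, one_re] at hq ⊢
  nlinarith

theorem re_mem_Icc_of_norm_le_mul_norm_two_add {q : ℂ} {ρ : ℝ} (hρ : ρ < 1)
    (h : ‖q‖ ≤ ρ * ‖2 + q‖) : q.re ∈ Icc (-(2 * ρ) / (1 + ρ)) (2 * ρ / (1 - ρ)) := by
  have hρ0 : 0 ≤ ρ := by
    by_contra! hneg
    have h2 : ‖2 + q‖ = 0 := by nlinarith [norm_nonneg (2 + q), norm_nonneg q]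
    rw [norm_eq_zero, add_eq_zero_iff_eq_neg'] at h2
    norm_num [h2] at h
  have hsq : q.re ^ 2 ≤ (ρ * (2 + q.re)) ^ 2 := by
    have := pow_le_pow_left₀ (norm_nonneg q) h 2
    rw [mul_pow, Complex.sq_norm, Complex.sq_norm, normSq_apply, normSq_apply] at this
    simp only [add_re, add_im, re_ofNat, im_ofNat] at this
    nlinarith [mul_nonneg (sq_nonneg q.im) (sub_nonneg.2 (pow_le_one₀ (n := 2) hρ0 hρ.le))]
  have hpos : 0 < 2 + q.re := by
    nlinarith [mul_le_mul_of_nonneg_right (pow_le_one₀ (n := 2) hρ0 hρ.le) (sq_nonneg (2 + q.re))]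
  obtain ⟨hlo, hhi⟩ := abs_le_of_sq_le_sq' hsq (by positivity)
  constructor
  · rw [div_le_iff₀ (by linarith)]; linarith
  · rw [le_div_iff₀ (by linarith)]; linarith

theorem HasDerivAt.log_norm {F : ℝ → ℂ} {F' : ℂ} {t : ℝ} (hF : HasDerivAt F F' t)
    (h0 : F t ≠ 0) : HasDerivAt (fun s ↦ Real.log ‖F s‖) (F' / F t).re t := by
  have hsq := (hF.norm_sq.log (by positivity)).div_const 2
  have e : (fun s ↦ Real.log ‖F s‖) = fun s ↦ Real.log (‖F s‖ ^ 2) / 2 := by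
    funext s; rw [Real.log_pow]; push_cast; ring
  rw [e]
  refine hsq.congr_deriv ?_
  rw [Complex.inner, div_re, Complex.sq_norm, mul_re, conj_re, conj_im]
  ring

theorem hasDerivAt_log_norm_comp_ofReal_mul {h : ℂ → ℂ} {z : ℂ} {t : ℝ}
    (hd : DifferentiableAt ℂ h (t * z)) (h0 : h (t * z) ≠ 0) :
    HasDerivAt (fun s : ℝ ↦ Real.log ‖h (s * z)‖) (z * logDeriv h (t * z)).re t := by
  have := ((hd.hasDerivAt.comp (t : ℂ) (hasDerivAt_mul_const z)).comp_ofReal).log_norm h0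
  simp only [Function.comp_def] at this
  refine this.congr_deriv ?_
  rw [logDeriv_apply]
  congr 1
  ring

theorem hasDerivAt_log_one_add_mul_pow {c t : ℝ} (m : ℕ) (ht : t ≠ 0)
    (hc : 1 + c * t ^ m ≠ 0) :
    HasDerivAt (fun s ↦ Real.log (1 + c * s ^ m)) (m * (c * t ^ m) / (1 + c * t ^ m) / t) t := by
  refine (((hasDerivAt_pow m t).const_mul c).const_add 1).log hc |>.congr_deriv ?_
  rcases m with _ | k
  · simp
  · rw [pow_succ]; field_simp; push_cast; ring

theorem sub_le_sub_of_hasDerivAt_le {u v u' v' : ℝ → ℝ} {a b : ℝ} (hab : a ≤ b)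
    (hu : ContinuousOn u (Icc a b)) (hv : ContinuousOn v (Icc a b))
    (hu' : ∀ t ∈ Ioo a b, HasDerivAt u (u' t) t) (hv' : ∀ t ∈ Ioo a b, HasDerivAt v (v' t) t)
    (hle : ∀ t ∈ Ioo a b, u' t ≤ v' t) : u b - u a ≤ v b - v a := by
  have hmono : MonotoneOn (v - u) (Icc a b) := by
    refine monotoneOn_of_deriv_nonneg (convex_Icc a b) (hv.sub hu) ?_ ?_ <;> rw [interior_Icc]
    · exact fun t ht ↦ ((hv' t ht).sub (hu' t ht)).differentiableAt.differentiableWithinAt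
    · intro t ht
      rw [((hv' t ht).sub (hu' t ht)).deriv]
      exact sub_nonneg.2 (hle t ht)
  have := hmono (left_mem_Icc.2 hab) (right_mem_Icc.2 hab) hab
  simp only [Pi.sub_apply] at this
  linarith

theorem DifferentiableOn.of_eq_add_pow_smul {𝕜 E : Type*} [NontriviallyNormedField 𝕜]
    [NormedAddCommGroup E] [NormedSpace 𝕜 E] {f P F : 𝕜 → E} {s : Set 𝕜} {n : ℕ}
    (hs : IsOpen s) (hf : DifferentiableOn 𝕜 f s) (hP : Differentiable 𝕜 P)
    (hF : DifferentiableAt 𝕜 F 0) (hfPF : ∀ z, f z = P z + z ^ n • F z) :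
    DifferentiableOn 𝕜 F s := by
  intro z hz
  rcases eq_or_ne z 0 with rfl | hz0
  · exact hF.differentiableWithinAt
  have hFeq : (fun w ↦ (w ^ n)⁻¹ • (f w - P w)) =ᶠ[𝓝 z] F := by
    filter_upwards [isOpen_ne.mem_nhds hz0] with w hw
    rw [hfPF w, add_sub_cancel_left, inv_smul_smul₀ (pow_ne_zero n hw)]
  refine (DifferentiableAt.congr_of_eventuallyEq ?_ hFeq.symm).differentiableWithinAt
  exact ((differentiableAt_id.pow n).inv (pow_ne_zero n hz0)).smul
    ((hf.differentiableAt (hs.mem_nhds hz)).sub (hP z))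

theorem exists_eq_add_pow_succ_mul {f : ℂ → ℂ} {m : ℕ} (hm : m ≠ 0)
    (hf : DifferentiableOn ℂ f (ball 0 1)) (h0 : f 0 = 0) (h1 : deriv f 0 = 1)
    (hvan : ∀ n : ℕ, 2 ≤ n → n ≤ m → iteratedDeriv n f 0 = 0) :
    ∃ G : ℂ → ℂ, DifferentiableOn ℂ G (ball 0 1) ∧ ∀ z, f z = z + z ^ (m + 1) * G z := by
  obtain ⟨G, hGa, hG⟩ :=
    (hf.analyticAt (ball_mem_nhds 0 one_pos)).exists_eq_sum_add_pow_mul (m + 1)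
  have htaylor : ∀ z : ℂ,
      ∑ i ∈ Finset.range (m + 1), (z ^ i / i.factorial) • iteratedDeriv i f 0 = z := by
    intro z
    rw [Finset.sum_eq_single 1 _ (by simp; omega)]
    · simp [h1]
    · intro i hi hi1
      obtain rfl | hi0 := eq_or_ne i 0
      · simp [h0]
      · rw [hvan i (by omega) (by simpa [Nat.lt_succ_iff] using hi), smul_zero]
  have hfG : ∀ z, f z = z + z ^ (m + 1) • G z := fun z ↦ by rw [hG z, htaylor z]
  exact ⟨G, hf.of_eq_add_pow_smul isOpen_ball differentiable_id hGa.differentiableAt hfG, hfG⟩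

theorem norm_le_norm_pow_of_eventuallyEq_pow_mul {ω B : ℂ → ℂ} {n : ℕ}
    (hω : DifferentiableOn ℂ ω (ball 0 1)) (hmaps : MapsTo ω (ball 0 1) (closedBall 0 1))
    (hB : ContinuousAt B 0) (hωB : ω =ᶠ[𝓝 0] fun x ↦ x ^ (n + 1) * B x) {z : ℂ}
    (hz : z ∈ ball (0 : ℂ) 1) : ‖ω z‖ ≤ ‖z‖ ^ (n + 1) := by
  have hω0 : ω 0 = 0 := by simpa using hωB.eq_of_nhds
  have hlittle : (ω · - ω 0) =o[𝓝 0] fun x ↦ ‖x - 0‖ ^ n := by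
    have hxB : (fun x : ℂ ↦ x * B x) =o[𝓝 0] fun _ ↦ (1 : ℝ) := by
      rw [isLittleO_one_iff]
      simpa using (continuousAt_id.fun_mul hB).tendsto
    have := hxB.mul_isBigO (isBigO_norm_right.2 (isBigO_refl (fun x : ℂ ↦ x ^ n) (𝓝 0)))
    refine this.congr' ?_ ?_
    · filter_upwards [hωB] with x hx
      rw [hω0, sub_zero, hx]; ring
    · filter_upwards with x; simp
  have := dist_le_mul_div_pow_of_mapsTo_ball_of_isLittleO hω (by rwa [hω0]) hlittle hz
  simpa [hω0] using this

theorem mul_deriv_one_add_pow_succ_mul {G : ℂ → ℂ} {y : ℂ} (n : ℕ) (hG : DifferentiableAt ℂ G y) :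
    y * deriv (fun z ↦ 1 + z ^ (n + 1) * G z) y =
      y ^ (n + 1) * ((n + 1) * G y + y * deriv G y) := by
  rw [(((hasDerivAt_pow (n + 1) y).fun_mul hG.hasDerivAt).const_add 1).deriv]
  push_cast
  ring

theorem norm_mul_logDeriv_le {m : ℕ} {h G : ℂ → ℂ} (hm : m ≠ 0)
    (hG : DifferentiableOn ℂ G (ball 0 1)) (hhG : ∀ z, h z = 1 + z ^ m * G z)
    (hne : ∀ x ∈ ball (0 : ℂ) 1, h x ≠ 0)
    (hre : ∀ x ∈ ball (0 : ℂ) 1, 0 < (1 + x * logDeriv h x).re) {x : ℂ}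
    (hx : x ∈ ball (0 : ℂ) 1) : ‖x * logDeriv h x‖ ≤ ‖x‖ ^ m * ‖2 + x * logDeriv h x‖ := by
  obtain ⟨n, rfl⟩ := Nat.exists_eq_add_one_of_ne_zero hm
  have hh_eq : h = fun z ↦ 1 + z ^ (n + 1) * G z := funext hhG
  have hh : DifferentiableOn ℂ h (ball 0 1) := by
    rw [hh_eq]; exact (differentiableOn_id.pow _ |>.mul hG).const_add 1
  have hG' : DifferentiableOn ℂ (deriv G) (ball 0 1) := hG.deriv isOpen_ball
  have hderiv : ∀ y ∈ ball (0 : ℂ) 1,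
      y * deriv h y = y ^ (n + 1) * ((n + 1) * G y + y * deriv G y) := fun y hy ↦ by
    rw [hh_eq, mul_deriv_one_add_pow_succ_mul n (hG.differentiableAt (isOpen_ball.mem_nhds hy))]
  set q : ℂ → ℂ := fun y ↦ y * logDeriv h y with hq_def
  have h2q : ∀ y ∈ ball (0 : ℂ) 1, 2 + q y ≠ 0 := by
    intro y hy h2
    have := congrArg re h2
    simp only [add_re, re_ofNat, zero_re] at this
    linarith [hre y hy, show (1 + q y).re = 1 + (q y).re by simp]
  have hq : DifferentiableOn ℂ q (ball 0 1) :=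
    differentiableOn_id.mul ((hh.deriv isOpen_ball).div hh hne)
  set B : ℂ → ℂ := fun y ↦ ((n + 1) * G y + y * deriv G y) / (h y * (2 + q y))
  have hB : DifferentiableOn ℂ B (ball 0 1) :=
    ((hG.const_mul _).add (differentiableOn_id.mul hG')).div (hh.mul (hq.const_add 2))
      fun y hy ↦ mul_ne_zero (hne y hy) (h2q y hy)
  have hqB : ∀ y ∈ ball (0 : ℂ) 1, q y / (2 + q y) = y ^ (n + 1) * B y := by
    intro y hy
    simp only [hq_def, B, logDeriv_apply, ← mul_div_assoc, hderiv y hy]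
    rw [div_div, mul_div_assoc]
  have hω : DifferentiableOn ℂ (fun y ↦ q y / (2 + q y)) (ball 0 1) :=
    hq.div (hq.const_add 2) h2q
  have hschwarz : ‖q x / (2 + q x)‖ ≤ ‖x‖ ^ (n + 1) := by
    refine norm_le_norm_pow_of_eventuallyEq_pow_mul hω (fun y hy ↦ ?_)
      (hB.continuousOn.continuousAt (ball_mem_nhds 0 one_pos)) ?_ hx
    · rw [mem_closedBall_zero_iff, norm_div, div_le_one (norm_pos_iff.2 (h2q y hy))]
      exact norm_le_norm_two_add_of_re_one_add_pos (hre y hy)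
    · filter_upwards [ball_mem_nhds (0 : ℂ) one_pos] using hqB
  rwa [norm_div, div_le_iff₀ (norm_pos_iff.2 (h2q x hx))] at hschwarz

theorem re_mul_logDeriv_mem_Icc {m : ℕ} {h : ℂ → ℂ} (hm : m ≠ 0)
    (hq : ∀ x ∈ ball (0 : ℂ) 1, ‖x * logDeriv h x‖ ≤ ‖x‖ ^ m * ‖2 + x * logDeriv h x‖)
    {x : ℂ} (hx : x ∈ ball (0 : ℂ) 1) :
    (x * logDeriv h x).re ∈ Icc (-(2 * ‖x‖ ^ m) / (1 + ‖x‖ ^ m)) (2 * ‖x‖ ^ m / (1 - ‖x‖ ^ m)) :=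
  re_mem_Icc_of_norm_le_mul_norm_two_add
    (pow_lt_one₀ (norm_nonneg x) (mem_ball_zero_iff.1 hx) hm) (hq x hx)

theorem one_add_mul_pow_pos {c t : ℝ} (m : ℕ) (hc : |c| < 1) (ht : t ∈ Icc (0 : ℝ) 1) :
    0 < 1 + c * t ^ m := by
  have : |c * t ^ m| < 1 := by
    rw [abs_mul, abs_of_nonneg (pow_nonneg ht.1 m)]
    exact (mul_le_of_le_one_right (abs_nonneg c) (pow_le_one₀ ht.1 ht.2)).trans_lt hc
  linarith [neg_abs_le (c * t ^ m)]

theorem log_norm_mem_Icc_of_norm_mul_logDeriv_le {m : ℕ} {h : ℂ → ℂ} (hm : m ≠ 0)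
    (hh : DifferentiableOn ℂ h (ball 0 1)) (hne : ∀ x ∈ ball (0 : ℂ) 1, h x ≠ 0) (h0 : h 0 = 1)
    (hq : ∀ x ∈ ball (0 : ℂ) 1, ‖x * logDeriv h x‖ ≤ ‖x‖ ^ m * ‖2 + x * logDeriv h x‖)
    {z : ℂ} (hz : z ∈ ball (0 : ℂ) 1) :
    Real.log ‖h z‖ ∈
      Icc (-(2 / m) * Real.log (1 + ‖z‖ ^ m)) (-(2 / m) * Real.log (1 - ‖z‖ ^ m)) := by
  set R := ‖z‖
  have hRm : |R ^ m| < 1 := by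
    rw [abs_of_nonneg (by positivity)]
    exact pow_lt_one₀ (norm_nonneg z) (mem_ball_zero_iff.1 hz) hm
  have hnorm : ∀ t ∈ Icc (0 : ℝ) 1, ‖(t : ℂ) * z‖ = t * R := fun t ht ↦ by
    rw [norm_mul, norm_real, Real.norm_of_nonneg ht.1]
  have hseg : ∀ t ∈ Icc (0 : ℝ) 1, (t : ℂ) * z ∈ ball 0 1 := fun t ht ↦ by
    rw [mem_ball_zero_iff, hnorm t ht]
    nlinarith [norm_nonneg z, ht.2, mem_ball_zero_iff.1 hz]
  set u : ℝ → ℝ := fun t ↦ Real.log ‖h (t * z)‖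
  have hu : ContinuousOn u (Icc 0 1) :=
    (continuous_norm.comp_continuousOn (hh.continuousOn.comp (by fun_prop) hseg)).log
      fun t ht ↦ norm_ne_zero_iff.2 (hne _ (hseg t ht))
  have hu' : ∀ t ∈ Ioo (0 : ℝ) 1, HasDerivAt u ((t * z * logDeriv h (t * z)).re / t) t := by
    intro t ht
    have hx := hseg t (Ioo_subset_Icc_self ht)
    refine (hasDerivAt_log_norm_comp_ofReal_mul (hh.differentiableAt (isOpen_ball.mem_nhds hx))
      (hne _ hx)).congr_deriv ?_
    rw [mul_assoc, re_ofReal_mul, mul_div_cancel_left₀ _ ht.1.ne']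
  -- `v (∓ R ^ m) t = log ‖h (t * R)‖` for the extremal functions `h = (1 ∓ z ^ m) ^ (-2 / m)`.
  set v : ℝ → ℝ → ℝ := fun c t ↦ -(2 / m) * Real.log (1 + c * t ^ m)
  have hv : ∀ c, |c| < 1 → ContinuousOn (v c) (Icc 0 1) := fun c hc ↦
    continuousOn_const.mul ((by fun_prop : ContinuousOn (fun t : ℝ ↦ 1 + c * t ^ m) _).log
      fun t ht ↦ (one_add_mul_pow_pos m hc ht).ne')
  have hv' : ∀ c, |c| < 1 → ∀ t ∈ Ioo (0 : ℝ) 1,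
      HasDerivAt (v c) (-(2 * (c * t ^ m)) / (1 + c * t ^ m) / t) t := fun c hc t ht ↦ by
    refine ((hasDerivAt_log_one_add_mul_pow m ht.1.ne' (one_add_mul_pow_pos m hc
      (Ioo_subset_Icc_self ht)).ne').const_mul (-(2 / m : ℝ))).congr_deriv ?_
    field_simp
  have hbound : ∀ t ∈ Ioo (0 : ℝ) 1, (t * z * logDeriv h (t * z)).re ∈
      Icc (-(2 * (R ^ m * t ^ m)) / (1 + R ^ m * t ^ m))
        (2 * (R ^ m * t ^ m) / (1 - R ^ m * t ^ m)) := fun t ht ↦ by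
    have := re_mul_logDeriv_mem_Icc hm hq (hseg t (Ioo_subset_Icc_self ht))
    rwa [hnorm t (Ioo_subset_Icc_self ht), mul_pow, mul_comm (t ^ m)] at this
  have hlower := sub_le_sub_of_hasDerivAt_le zero_le_one (hv _ hRm) hu (hv' _ hRm) hu'
    fun t ht ↦ div_le_div_of_nonneg_right (hbound t ht).1 ht.1.le
  have hupper := sub_le_sub_of_hasDerivAt_le zero_le_one hu (hv (-R ^ m) (by rwa [abs_neg]))
    hu' (hv' _ (by rwa [abs_neg])) fun t ht ↦ by
      refine div_le_div_of_nonneg_right ((hbound t ht).2.trans_eq ?_) ht.1.le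
      ring
  simp [u, v, h0, hm, ← sub_eq_add_neg] at hlower hupper
  exact ⟨by linarith, by linarith⟩

theorem mul_deriv_div_eq_one_add_mul_logDeriv {h : ℂ → ℂ} {x : ℂ} (hx : x ≠ 0)
    (hh : DifferentiableAt ℂ h x) (hne : h x ≠ 0) :
    x * deriv (fun z ↦ z * h z) x / (x * h x) = 1 + x * logDeriv h x := by
  rw [mul_div_assoc, ← logDeriv_apply,
    logDeriv_mul (f := fun z ↦ z) x hx hne differentiableAt_id hh, logDeriv_id', mul_add,
    mul_one_div_cancel hx]

theorem stmt16 (m : ℕ) (hm : 1 ≤ m) (f : ℂ → ℂ)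
    (hf : DifferentiableOn ℂ f (ball (0:ℂ) 1))
    (h0 : f 0 = 0) (h1 : deriv f 0 = 1)
    (hvan : ∀ n : ℕ, 2 ≤ n → n ≤ m → iteratedDeriv n f 0 = 0)
    (hnz : ∀ z ∈ ball (0:ℂ) 1, z ≠ 0 → f z ≠ 0)
    (hre : ∀ z ∈ ball (0:ℂ) 1, z ≠ 0 → 0 < (z * deriv f z / f z).re) :
    ∀ z ∈ ball (0:ℂ) 1,
      ‖z‖ / (1 + ‖z‖ ^ m) ^ ((2:ℝ) / m) ≤ ‖f z‖ ∧
      ‖f z‖ ≤ ‖z‖ / (1 - ‖z‖ ^ m) ^ ((2:ℝ) / m) := by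
  have hm0 : m ≠ 0 := by omega
  obtain ⟨G, hG, hfG⟩ := exists_eq_add_pow_succ_mul hm0 hf h0 h1 hvan
  set h : ℂ → ℂ := fun z ↦ 1 + z ^ m * G z
  have hfh : f = fun z ↦ z * h z := funext fun z ↦ by rw [hfG]; ring
  have hh : DifferentiableOn ℂ h (ball 0 1) := (differentiableOn_id.pow m |>.mul hG).const_add 1
  have hne : ∀ x ∈ ball (0 : ℂ) 1, h x ≠ 0 := by
    intro x hx
    rcases eq_or_ne x 0 with rfl | hx0
    · simp [h, hm0]
    · exact right_ne_zero_of_mul (hfh ▸ hnz x hx hx0)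
  have hre' : ∀ x ∈ ball (0 : ℂ) 1, 0 < (1 + x * logDeriv h x).re := by
    intro x hx
    rcases eq_or_ne x 0 with rfl | hx0
    · simp
    have := hre x hx hx0
    rwa [hfh, mul_deriv_div_eq_one_add_mul_logDeriv hx0
      (hh.differentiableAt (isOpen_ball.mem_nhds hx)) (hne x hx)] at this
  intro z hz
  obtain ⟨hlow, hupp⟩ := log_norm_mem_Icc_of_norm_mul_logDeriv_le hm0 hh hne (by simp [h, hm0])
    (fun x hx ↦ norm_mul_logDeriv_le hm0 hG (fun _ ↦ rfl) hne hre' hx) hz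
  have hpos : 0 < ‖h z‖ := norm_pos_iff.2 (hne z hz)
  have hRm : ‖z‖ ^ m < 1 := pow_lt_one₀ (norm_nonneg z) (mem_ball_zero_iff.1 hz) hm0
  rw [hfh, norm_mul, Real.rpow_def_of_pos (by positivity), Real.rpow_def_of_pos (by linarith),
    div_eq_mul_inv _ (Real.exp _), div_eq_mul_inv _ (Real.exp _), ← Real.exp_neg, ← Real.exp_neg]
  constructor <;> refine mul_le_mul_of_nonneg_left ?_ (norm_nonneg z)
  · rw [← Real.le_log_iff_exp_le hpos]; linarith
  · rw [← Real.log_le_iff_le_exp hpos]; linarith
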